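/- Let G = (P, X, ≤, ≤*, ◁) be a Gowers space satisfying the pigeonhole principle, and let 𝒳 ⊆ X^ω be a strategically Ramsey set. Then for every p ∈ P there exists q ≤ p such that in the asymptotic game F_q, player I has a strategy either to reach 𝒳, or to reach the complement of 𝒳. -/

import Mathlib

open MeasureTheory Filter Topology TopologicalSpace

/-! ## Basic sequence helpers -/

/-- The list `[x 0, …, x (n-1)]`. -/
def preSeq {X : Type*} (x : ℕ → X) (n : ℕ) : List X := (List.range n).map x

/-- Interleaving of two sequences: `x 0, y 0, x 1, y 1, …`. -/
def itl {X : Type*} (x y : ℕ → X) : ℕ → X := fun k => if k % 2 = 0 then x (k / 2) else y (k / 2)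

/-- Outcome produced by a strategy of player II against the moves `f` of player I. -/
def gOut {Q X : Type*} (τ : List Q → X) (f : ℕ → Q) : ℕ → X :=
  fun n => τ ((List.range (n + 1)).map f)

/-! ## Gowers spaces -/

structure GowersSpace (P : Type*) (X : Type*) where
  le : P → P → Prop
  les : P → P → Prop
  tri : List X → P → Prop
  le_refl : ∀ p, le p p
  le_trans : ∀ p q r, le p q → le q r → le p r
  les_refl : ∀ p, les p p
  les_trans : ∀ p q r, les p q → les q r → les p r
  le_imp_les : ∀ p q, le p q → les p q
  diag : ∀ p q, les p q → ∃ r, le r p ∧ le r q ∧ les p r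
  decseq : ∀ f : ℕ → P, (∀ n, le (f (n + 1)) (f n)) → ∃ p, ∀ n, les p (f n)
  ext : ∀ (p : P) (s : List X), ∃ x, tri (s ++ [x]) p
  mono : ∀ (s : List X) (p q : P), tri s p → le p q → tri s q

namespace GowersSpace

variable {P X : Type*} (G : GowersSpace P X)

/-- `q ⪅ p` : `q ≤ p` and `p ≤* q`. -/
def lap (q p : P) : Prop := G.le q p ∧ G.les p q

/-- Compatibility of two subspaces. -/
def compat (a b : P) : Prop := ∃ r, G.le r a ∧ G.le r b

/-- Player I has a strategy in the asymptotic game `F_p` to reach `Y`. -/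
def IStratF (p : P) (Y : Set (ℕ → X)) : Prop :=
  ∃ σ : List X → P, (∀ s, G.lap (σ s) p) ∧
    ∀ x : ℕ → X, (∀ n, G.tri (preSeq x (n + 1)) (σ (preSeq x n))) → x ∈ Y

/-- Player II has a strategy in Gowers' game `G_p` to reach `Y`. -/
def IIStratG (p : P) (Y : Set (ℕ → X)) : Prop :=
  ∃ τ : List P → X, ∀ f : ℕ → P, (∀ n, G.le (f n) p) →
    (∀ n, G.tri (preSeq (gOut τ f) (n + 1)) (f n)) ∧ gOut τ f ∈ Y

/-! ### Adversarial-type games (`A_p`, `B_p`, Kastanas' game `K_p`).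

In all these games, player II first plays `p₀ ∈ P`; then at each turn `i` player I plays
`(x_i, q_i) ∈ X × P` and player II answers `(y_i, p_{i+1}) ∈ X × P`.  The outcome is
`(x_0, y_0, x_1, y_1, …)`. -/

/-- Moves of player I computed from his strategy `σ` and the moves `p₀`, `g` of player II. -/
def advI (σ : P → List (X × P) → X × P) (p0 : P) (g : ℕ → X × P) (n : ℕ) : X × P :=
  σ p0 ((List.range n).map g)

/-- The sequence `p₀, p₁, p₂, …` of subspaces played by player II, extracted from `p₀` and `g`. -/
def advIIps (p0 : P) (g : ℕ → X × P) : ℕ → P :=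
  fun n => Nat.rec (motive := fun _ => P) p0 (fun k _ => (g k).2) n

/-- The outcome when player I follows `σ` and player II plays `p₀`, `g`. -/
def advIOut (σ : P → List (X × P) → X × P) (p0 : P) (g : ℕ → X × P) : ℕ → X :=
  itl (fun n => (advI σ p0 g n).1) (fun n => (g n).1)

/-- Player I has a strategy in the game `A_p` to reach `Y`. -/
def IStratA (p : P) (Y : Set (ℕ → X)) : Prop :=
  ∃ σ : P → List (X × P) → X × P,
    (∀ p0 g n, G.tri (preSeq (advIOut σ p0 g) (2 * n + 1)) (advIIps p0 g n) ∧
      G.lap (advI σ p0 g n).2 p) ∧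
    ∀ p0 g, (∀ n, G.le (advIIps p0 g n) p) →
      (∀ n, G.tri (preSeq (advIOut σ p0 g) (2 * n + 2)) ((advI σ p0 g n).2)) →
      advIOut σ p0 g ∈ Y

/-- Player I has a strategy in Kastanas' game `K_p` to reach `Y`. -/
def IStratK (p : P) (Y : Set (ℕ → X)) : Prop :=
  ∃ σ : P → List (X × P) → X × P,
    (∀ p0 g n, G.tri (preSeq (advIOut σ p0 g) (2 * n + 1)) (advIIps p0 g n) ∧
      G.le (advI σ p0 g n).2 (advIIps p0 g n)) ∧
    ∀ p0 g, G.le p0 p →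
      (∀ n, G.tri (preSeq (advIOut σ p0 g) (2 * n + 2)) ((advI σ p0 g n).2) ∧
        G.le (advIIps p0 g (n + 1)) ((advI σ p0 g n).2)) →
      advIOut σ p0 g ∈ Y

/-- Moves of player II computed from her strategy `τ` and the moves `h` of player I:
`advII τ h n = (y_n, p_{n+1})`. -/
def advII (τ : List (X × P) → X × P) (h : ℕ → X × P) (n : ℕ) : X × P :=
  τ ((List.range (n + 1)).map h)

/-- The sequence `p₀, p₁, …` played by player II following the strategy `(p₀, τ)`. -/
def advIIpsB (p0 : P) (τ : List (X × P) → X × P) (h : ℕ → X × P) : ℕ → P :=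
  fun n => Nat.rec (motive := fun _ => P) p0 (fun k _ => (advII τ h k).2) n

/-- The outcome when player II follows `τ` and player I plays `h`. -/
def advIIOut (τ : List (X × P) → X × P) (h : ℕ → X × P) : ℕ → X :=
  itl (fun n => (h n).1) (fun n => (advII τ h n).1)

/-- Player II has a strategy in the game `B_p` to reach `Y`. -/
def IIStratB (p : P) (Y : Set (ℕ → X)) : Prop :=
  ∃ (p0 : P) (τ : List (X × P) → X × P), G.lap p0 p ∧
    (∀ h n, G.tri (preSeq (advIIOut τ h) (2 * n + 2)) ((h n).2) ∧
      G.lap (advIIpsB p0 τ h (n + 1)) p) ∧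
    ∀ h : ℕ → X × P,
      (∀ n, G.tri (preSeq (advIIOut τ h) (2 * n + 1)) (advIIpsB p0 τ h n) ∧ G.le ((h n).2) p) →
      advIIOut τ h ∈ Y

/-- Player II has a strategy in Kastanas' game `K_p` to reach `Y`. -/
def IIStratK (p : P) (Y : Set (ℕ → X)) : Prop :=
  ∃ (p0 : P) (τ : List (X × P) → X × P), G.le p0 p ∧
    (∀ h n, G.tri (preSeq (advIIOut τ h) (2 * n + 2)) ((h n).2) ∧
      G.le (advIIpsB p0 τ h (n + 1)) ((h n).2)) ∧
    ∀ h : ℕ → X × P,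
      (∀ n, G.tri (preSeq (advIIOut τ h) (2 * n + 1)) (advIIpsB p0 τ h n) ∧
        G.le ((h n).2) (advIIpsB p0 τ h n)) →
      advIIOut τ h ∈ Y

/-- `(p₀, τ)` is a strategy for player II in Kastanas' game `K_p`
(it always produces legal moves). -/
def IsIIStratK (p p0 : P) (τ : List (X × P) → X × P) : Prop :=
  G.le p0 p ∧ ∀ (h : ℕ → X × P) (n : ℕ),
    G.tri (preSeq (advIIOut τ h) (2 * n + 2)) ((h n).2) ∧
      G.le (advIIpsB p0 τ h (n + 1)) ((h n).2)

/-- `h` extends the finite list `l` of moves. -/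
def extFun (h : ℕ → X × P) (l : List (X × P)) : Prop := (List.range l.length).map h = l

/-- The list `l` of moves of player I determines a state (a legal partial play ending with
a move of II) when II follows the strategy `(p₀, τ)` in `K_p`. -/
def IsStateK (p0 : P) (τ : List (X × P) → X × P) (l : List (X × P)) : Prop :=
  ∀ h : ℕ → X × P, extFun h l → ∀ k < l.length,
    G.tri (preSeq (advIIOut τ h) (2 * k + 1)) (advIIpsB p0 τ h k) ∧
      G.le ((h k).2) (advIIpsB p0 τ h k)

/-- Player I can legally continue the state determined by `l` by the move `(x, u)`. -/
def CanContinue (p0 : P) (τ : List (X × P) → X × P) (l : List (X × P)) (x : X) (u : P) : Prop :=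
  ∀ h : ℕ → X × P, extFun h (l ++ [(x, u)]) →
    G.tri (preSeq (advIIOut τ h) (2 * l.length + 1)) (advIIpsB p0 τ h l.length) ∧
      G.le u (advIIpsB p0 τ h l.length)

/-- The pigeonhole principle for a Gowers space. -/
def Pigeonhole : Prop :=
  ∀ (p : P) (s : List X) (A : Set X), ∃ q, G.le q p ∧
    ((∀ x, G.tri (s ++ [x]) q → x ∈ A) ∨ ∀ x, G.tri (s ++ [x]) q → x ∉ A)

/-- A set is strategically Ramsey. -/
def StrategicallyRamsey (Y : Set (ℕ → X)) : Prop :=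
  ∀ p : P, ∃ q, G.le q p ∧ (G.IStratF q Yᶜ ∨ G.IIStratG q Y)

/-- The doubled Gowers space, over the set of points `X × Bool`. -/
def double : GowersSpace P (X × Bool) where
  le := G.le
  les := G.les
  tri := fun s p => G.tri (s.map Prod.fst) p
  le_refl := G.le_refl
  le_trans := G.le_trans
  les_refl := G.les_refl
  les_trans := G.les_trans
  le_imp_les := G.le_imp_les
  diag := G.diag
  decseq := G.decseq
  ext := fun p s => by
    obtain ⟨x, hx⟩ := G.ext p (s.map Prod.fst)
    exact ⟨(x, true), by simpa using hx⟩
  mono := fun s p q h hle => G.mono _ p q h hle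

end GowersSpace

/-!
If player I has a strategy in `F_q` to reach `𝒳ᶜ` there is nothing to do, so let `τ` be a
strategy for II in `G_q` reaching `𝒳`. From a finite sequence `s` player I can replay a run of
`G_q` in which `τ` produced `s`, and let `A_s` be the set of points `τ` may answer next.
Diagonalizing the pigeonhole principle over the countably many `s` gives `Q ≤ q` such that each
`s` is decided, for `A_s`, by some `r ⪅ Q`. No `r ≤ q` can force the complement of `A_s`, since
`τ` answers `r` legally inside `A_s`; so I can always force `A_s`, and then every outcome of his
play in `F_Q` is the outcome of `τ` against a run of `G_q`, hence lies in `𝒳`.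
-/

lemma preSeq_succ {α : Type*} (f : ℕ → α) (n : ℕ) : preSeq f (n + 1) = preSeq f n ++ [f n] := by
  simp [preSeq, List.range_succ]

@[simp]
lemma preSeq_length {α : Type*} (f : ℕ → α) (n : ℕ) : (preSeq f n).length = n := by
  simp [preSeq]

lemma exists_preSeq_eq_concat {α : Type*} (l : List α) (a : α) :
    ∃ f : ℕ → α, preSeq f (l.length + 1) = l ++ [a] ∧ ∀ k, f k ∈ l ++ [a] := by
  refine ⟨fun k => (l ++ [a])[min k l.length]'(by simp), ?_, fun k => List.getElem_mem _⟩
  apply List.ext_getElem (by simp)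
  intro k hk _
  simp only [preSeq, List.getElem_map, List.getElem_range]
  congr
  simp only [preSeq_length] at hk
  omega

/-- The answers `[τ [f₀], τ [f₀, f₁], …]` of a strategy `τ` of player II to the moves
`l = [f₀, f₁, …]`. -/
def answers {α β : Type*} (τ : List α → β) (l : List α) : List β := l.inits.tail.map τ

lemma answers_concat {α β : Type*} (τ : List α → β) (l : List α) (a : α) :
    answers τ (l ++ [a]) = answers τ l ++ [τ (l ++ [a])] := by
  have : (l.inits.map τ) ≠ [] := by cases l <;> simp
  simp [answers, List.inits_append, List.tail_append_of_ne_nil this]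

lemma preSeq_gOut {α β : Type*} (τ : List α → β) (f : ℕ → α) (n : ℕ) :
    preSeq (gOut τ f) n = answers τ (preSeq f n) := by
  induction n with
  | zero => simp [preSeq, answers]
  | succ n ih => rw [preSeq_succ, ih, preSeq_succ, answers_concat, ← preSeq_succ]; rfl

namespace GowersSpace

variable {P X : Type*} (G : GowersSpace P X)

/-- The paper's `q ⊆_s A`. -/
def SubsetAt (q : P) (s : List X) (A : Set X) : Prop := ∀ x, G.tri (s ++ [x]) q → x ∈ A

variable {G}

lemma SubsetAt.mono {q r : P} {s : List X} {A : Set X} (h : G.SubsetAt q s A) (hrq : G.le r q) :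
    G.SubsetAt r s A :=
  fun x hx => h x (G.mono _ _ _ hx hrq)

lemma exists_le_forall_les (f : ℕ → P) (hf : ∀ n, G.le (f (n + 1)) (f n)) :
    ∃ Q, G.le Q (f 0) ∧ ∀ n, G.les Q (f n) := by
  obtain ⟨p', hp'⟩ := G.decseq f hf
  obtain ⟨Q, hQp', hQf, -⟩ := G.diag p' (f 0) (hp' 0)
  exact ⟨Q, hQf, fun n => G.les_trans _ _ _ (G.le_imp_les _ _ hQp') (hp' n)⟩

lemma Pigeonhole.exists_le_forall_exists_lap [Countable X] (hPH : G.Pigeonhole)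
    (A : List X → Set X) (q : P) :
    ∃ Q, G.le Q q ∧ ∀ s, ∃ r, G.lap r Q ∧ (G.SubsetAt r s (A s) ∨ G.SubsetAt r s (A s)ᶜ) := by
  obtain ⟨e, he⟩ := exists_surjective_nat (List X)
  choose next hnext hdec using fun (i : ℕ) (p : P) => hPH p (e i) (A (e i))
  let f : ℕ → P := fun n => Nat.rec q next n
  obtain ⟨Q, hQq, hQf⟩ := exists_le_forall_les f (fun n => hnext n (f n))
  refine ⟨Q, hQq, fun s => ?_⟩
  obtain ⟨i, rfl⟩ := he s
  obtain ⟨r, hrQ, hrf, hQr⟩ := G.diag Q (f (i + 1)) (hQf (i + 1))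
  exact ⟨r, ⟨hrQ, hQr⟩, (hdec i (f i)).imp (fun h => SubsetAt.mono h hrf)
    (fun h => SubsetAt.mono h hrf)⟩

section Replay

variable (G) (τ : List P → X) (q : P)

def nextAnswers (l : List P) : Set X := {x | ∃ u, G.le u q ∧ τ (l ++ [u]) = x}

open Classical in
noncomputable def moveFor (l : List P) (x : X) : P :=
  if h : x ∈ G.nextAnswers τ q l then h.choose else q

/-- Player I's reconstruction of a run of `G_q` in which `τ` answers `s`; where `τ` cannot
produce the next point, the move `q` is a placeholder. -/
noncomputable def replay (s : List X) : List P :=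
  s.foldl (fun l x => l ++ [G.moveFor τ q l x]) []

variable {G τ q}

lemma moveFor_le (l : List P) (x : X) : G.le (G.moveFor τ q l x) q := by
  unfold moveFor
  split
  · next h => exact h.choose_spec.1
  · exact G.le_refl q

lemma moveFor_spec {l : List P} {x : X} (h : x ∈ G.nextAnswers τ q l) :
    τ (l ++ [G.moveFor τ q l x]) = x := by
  unfold moveFor
  rw [dif_pos h]
  exact h.choose_spec.2

lemma replay_concat (s : List X) (x : X) :
    G.replay τ q (s ++ [x]) = G.replay τ q s ++ [G.moveFor τ q (G.replay τ q s) x] := by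
  simp [replay, List.foldl_append]

lemma le_of_mem_replay {s : List X} {u : P} (hu : u ∈ G.replay τ q s) : G.le u q := by
  induction s using List.reverseRecOn with
  | nil => simp [replay] at hu
  | append_singleton s x ih =>
    rcases List.mem_append.1 (replay_concat s x ▸ hu) with hu | hu
    · exact ih hu
    · exact List.mem_singleton.1 hu ▸ moveFor_le _ _

lemma answers_replay_concat {s : List X} {x : X} (hs : answers τ (G.replay τ q s) = s)
    (hx : x ∈ G.nextAnswers τ q (G.replay τ q s)) :
    answers τ (G.replay τ q (s ++ [x])) = s ++ [x] := by
  rw [replay_concat, answers_concat, hs, moveFor_spec hx]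

lemma not_subsetAt_compl_nextAnswers
    (hτ : ∀ f : ℕ → P, (∀ n, G.le (f n) q) → ∀ n, G.tri (preSeq (gOut τ f) (n + 1)) (f n))
    {l : List P} (hl : ∀ u ∈ l, G.le u q) {r : P} (hr : G.le r q) :
    ¬ G.SubsetAt r (answers τ l) (G.nextAnswers τ q l)ᶜ := by
  intro h
  obtain ⟨f, hfl, hfmem⟩ := exists_preSeq_eq_concat l r
  have hlast : f l.length = r := by
    rw [preSeq_succ] at hfl
    simpa using (List.append_inj' hfl rfl).2
  have hfq : ∀ n, G.le (f n) q := fun n => by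
    rcases List.mem_append.1 (hfmem n) with hu | hu
    · exact hl _ hu
    · exact List.mem_singleton.1 hu ▸ hr
  have htri := hτ f hfq l.length
  rw [preSeq_gOut, hfl, answers_concat, hlast] at htri
  exact h _ htri ⟨r, hr, rfl⟩

end Replay

theorem IIStratG.exists_le_IStratF [Countable X] (hPH : G.Pigeonhole) {q : P}
    {Y : Set (ℕ → X)} (hII : G.IIStratG q Y) : ∃ Q, G.le Q q ∧ G.IStratF Q Y := by
  obtain ⟨τ, hτ⟩ := hII
  obtain ⟨Q, hQq, hdec⟩ :=
    hPH.exists_le_forall_exists_lap (fun s => G.nextAnswers τ q (G.replay τ q s)) q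
  have hσ : ∀ s, ∃ r, G.lap r Q ∧ (answers τ (G.replay τ q s) = s →
      G.SubsetAt r s (G.nextAnswers τ q (G.replay τ q s))) := by
    intro s
    obtain ⟨r, hrQ, hr | hr⟩ := hdec s
    · exact ⟨r, hrQ, fun _ => hr⟩
    · refine ⟨r, hrQ, fun hs => absurd hr ?_⟩
      have := not_subsetAt_compl_nextAnswers (l := G.replay τ q s) (fun f hf => (hτ f hf).1)
        (fun _ => le_of_mem_replay) (G.le_trans _ _ _ hrQ.1 hQq)
      rwa [hs] at this
  choose σ hσlap hσsub using hσ
  refine ⟨Q, hQq, σ, hσlap, fun x hx => ?_⟩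
  have hnext : ∀ n, answers τ (G.replay τ q (preSeq x n)) = preSeq x n →
      x n ∈ G.nextAnswers τ q (G.replay τ q (preSeq x n)) := fun n hn =>
    hσsub _ hn _ (preSeq_succ x n ▸ hx n)
  have hanswers : ∀ n, answers τ (G.replay τ q (preSeq x n)) = preSeq x n := by
    intro n
    induction n with
    | zero => rfl
    | succ n ih => rw [preSeq_succ]; exact answers_replay_concat ih (hnext n ih)
  let f : ℕ → P := fun n => G.moveFor τ q (G.replay τ q (preSeq x n)) (x n)
  have hf : ∀ n, preSeq f n = G.replay τ q (preSeq x n) := by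
    intro n
    induction n with
    | zero => rfl
    | succ n ih => rw [preSeq_succ, ih, preSeq_succ, replay_concat]
  have hout : gOut τ f = x := funext fun n => by
    change τ (preSeq f (n + 1)) = x n
    rw [preSeq_succ, hf]
    exact moveFor_spec (hnext n (hanswers n))
  simpa [hout] using (hτ f fun n => moveFor_le _ _).2

end GowersSpace

theorem stmt11_general {P X : Type} [Countable X]
    (G : GowersSpace P X) (hPH : G.Pigeonhole)
    (𝒳 : Set (ℕ → X)) (hSR : G.StrategicallyRamsey 𝒳) (p : P) :
    ∃ q, G.le q p ∧ (G.IStratF q 𝒳 ∨ G.IStratF q 𝒳ᶜ) := by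
  obtain ⟨q, hqp, hI | hII⟩ := hSR p
  · exact ⟨q, hqp, Or.inr hI⟩
  · obtain ⟨Q, hQq, hQ⟩ := hII.exists_le_IStratF hPH
    exact ⟨Q, G.le_trans _ _ _ hQq hqp, Or.inl hQ⟩

theorem stmt11 {P X : Type} [Nonempty P] [Nonempty X] [Countable X]
    (G : GowersSpace P X) (hPH : G.Pigeonhole)
    (𝒳 : Set (ℕ → X)) (hSR : G.StrategicallyRamsey 𝒳) (p : P) :
    ∃ q, G.le q p ∧ (G.IStratF q 𝒳 ∨ G.IStratF q 𝒳ᶜ) :=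
  stmt11_general G hPH 𝒳 hSR p
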